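/- Let μ be an absolutely continuous probability measure on ℝ with CDF F_μ, and let y_1 < ... < y_m be points with percentage capacities q ∈ (0,1)^m. Set ζ_j = F_μ(y_{j+1}) − F_μ(y_{j−1}) with the conventions y_0 = −∞, y_{m+1} = +∞ (so F_μ(y_0) = 0, F_μ(y_{m+1}) = 1). If there is a permutation γ of [m] with ζ_j ≤ q_{γ(j)} for all j, then the Voronoi weights η_j = F_μ(z_j) − F_μ(z_{j−1}) with z_j = (y_j + y_{j+1})/2 satisfy η_j ≤ q_{γ(j)} for all j; i.e., the unconstrained optimal weights are feasible under the capacity constraints. -/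
import Mathlib


/-- Extended CDF values at the points `y 1 < … < y m`, with the conventions
`F(y 0) = F(-∞) = 0` and `F(y (m+1)) = F(+∞) = 1`. -/
noncomputable def extCdfAtPoints (F : ℝ → ℝ) (m : ℕ) (y : ℕ → ℝ) (k : ℕ) : ℝ :=
  if k = 0 then 0 else if m + 1 ≤ k then 1 else F (y k)

/-- Extended CDF values at the midpoints `z j = (y j + y (j+1))/2`, with the
conventions `F(z 0) = F(-∞) = 0` and `F(z m) = F(+∞) = 1`. -/
noncomputable def extCdfAtMidpoints (F : ℝ → ℝ) (m : ℕ) (y : ℕ → ℝ) (k : ℕ) : ℝ :=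
  if k = 0 then 0 else if m ≤ k then 1 else F ((y k + y (k + 1)) / 2)

/-- if `ζ_j = F(y_{j+1}) - F(y_{j-1}) ≤ q_{γ(j)}` for all `j`, then the
Voronoi weights `η_j = F(z_j) - F(z_{j-1})` (midpoint cells) also satisfy
`η_j ≤ q_{γ(j)}`: the unconstrained optimal weights are feasible under the capacity
constraints. -/
theorem voronoi_weights_feasible (F : ℝ → ℝ) (hFmono : Monotone F)
    (hF01 : ∀ x, 0 ≤ F x ∧ F x ≤ 1)
    (m : ℕ) (hm : 1 ≤ m) (y : ℕ → ℝ)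
    (hy : ∀ i j, 1 ≤ i → i < j → j ≤ m → y i < y j)
    (q : ℕ → ℝ) (hq : ∀ j, 1 ≤ j → j ≤ m → 0 < q j ∧ q j < 1)
    (γ : Equiv.Perm ℕ) (hγ : ∀ j, 1 ≤ j → j ≤ m → 1 ≤ γ j ∧ γ j ≤ m)
    (hζ : ∀ j, 1 ≤ j → j ≤ m →
      extCdfAtPoints F m y (j + 1) - extCdfAtPoints F m y (j - 1) ≤ q (γ j)) :
    ∀ j, 1 ≤ j → j ≤ m →
      extCdfAtMidpoints F m y j - extCdfAtMidpoints F m y (j - 1) ≤ q (γ j) := by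
  intro j hj1 hjm
  have key := hζ j hj1 hjm
  have h1 : extCdfAtMidpoints F m y j ≤ extCdfAtPoints F m y (j + 1) := by
    unfold extCdfAtPoints extCdfAtMidpoints
    have hj0 : j ≠ 0 := by omega
    have hj10 : j + 1 ≠ 0 := by omega
    simp only [hj0, hj10, if_neg, if_false]
    rcases le_or_gt m j with h | h
    · simp [h, Nat.add_le_add_right h 1]
    · have h1 : ¬ m ≤ j := not_le.mpr h
      have h2 : ¬ m + 1 ≤ j + 1 := by omega
      simp only [h1, h2, if_false]
      apply hFmono
      have := hy j (j+1) hj1 (by omega) (by omega)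
      linarith
  have h2 : extCdfAtPoints F m y (j - 1) ≤ extCdfAtMidpoints F m y (j - 1) := by
    unfold extCdfAtPoints extCdfAtMidpoints
    rcases Nat.eq_or_lt_of_le hj1 with h1 | h1
    · simp [← h1]
    · have h0 : j - 1 ≠ 0 := by omega
      have h2 : ¬ m + 1 ≤ j - 1 := by omega
      have h3 : ¬ m ≤ j - 1 := by omega
      simp only [h0, h2, h3, if_false]
      apply hFmono
      have : y (j-1) < y (j-1+1) := hy (j-1) (j-1+1) (by omega) (by omega) (by omega)
      linarith

  linarith
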